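/- arXiv:1809.08467 — 10 statements merged into one kernel-verified Lean document; each statement's English description precedes it below -/
import Mathlib

section
/- A graph B on 2n vertices is 2-variegated (i.e., its vertex set can be partitioned into two parts of size n such that each vertex of one part is adjacent to exactly one vertex of the other part) if and only if there exists a set S of n pairwise disjoint (independent) edges in B such that no cycle of B contains an odd number of edges from S. -/
open SimpleGraph
open scoped Classical

/-- A graph is 2-variegated (bivariegated) if its vertex set can be partitioned into
two equinumerous parts such that every vertex is adjacent to exactly one vertex
of the part not containing it. -/
def SimpleGraph.IsBivariegated {V : Type*} (G : SimpleGraph V) : Prop :=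
  ∃ f : V → Bool,
    Nonempty ({v // f v = true} ≃ {v // f v = false}) ∧
    ∀ v : V, ∃! w : V, f w ≠ f v ∧ G.Adj v w

/-!
Both sides describe a colouring `f : V → Bool` whose bichromatic edges form a perfect matching.
Given `f`, let `S` be its bichromatic edges: along any walk the parity of the number of `S`-edges
records whether the colour has changed, so closed walks, and in particular cycles, meet `S`
evenly. Conversely, `n` independent edges on `2n` vertices cover every vertex. If every cycle
meets `S` evenly then so does every closed walk, since a closed walk decomposes into cycles and
edges traversed back and forth. Hence colouring each vertex by the parity of `S`-edges on a walk
from a fixed vertex of its component is well defined, and its bichromatic edges are exactly `S`.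
-/

namespace Sym2

open Finset

variable {V : Type*} {S : Finset (Sym2 V)}

theorem forall_existsUnique_mk_mem_iff :
    (∀ v, ∃! w, s(v, w) ∈ S) ↔
      (∀ e ∈ S, ∀ e' ∈ S, e ≠ e' → ∀ v : V, ¬(v ∈ e ∧ v ∈ e')) ∧ ∀ v : V, ∃ e ∈ S, v ∈ e := by
  constructor
  · intro h
    refine ⟨?_, fun v => ⟨_, (h v).exists.choose_spec, mem_mk_left _ _⟩⟩
    rintro e he e' he' hne v ⟨hv, hv'⟩
    obtain ⟨w, rfl⟩ := mem_iff_exists.mp hv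
    obtain ⟨w', rfl⟩ := mem_iff_exists.mp hv'
    exact hne (congrArg _ ((h v).unique he he'))
  · rintro ⟨hind, hcover⟩ v
    obtain ⟨e, he, hv⟩ := hcover v
    obtain ⟨w, rfl⟩ := mem_iff_exists.mp hv
    refine ⟨w, he, fun w' hw' => (congr_right (a := v)).mp ?_⟩
    by_contra hne
    exact hind _ hw' _ he hne v ⟨mem_mk_left _ _, mem_mk_left _ _⟩

variable [DecidableEq V]

theorem card_biUnion_toFinset_of_pairwise_disjoint (hS : ∀ e ∈ S, ¬e.IsDiag)
    (hind : ∀ e ∈ S, ∀ e' ∈ S, e ≠ e' → ∀ v : V, ¬(v ∈ e ∧ v ∈ e')) :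
    #(S.biUnion toFinset) = 2 * #S := by
  rw [Finset.card_biUnion,
    Finset.sum_congr rfl fun e he => card_toFinset_of_not_isDiag e (hS e he),
    Finset.sum_const, smul_eq_mul, mul_comm]
  intro e he e' he' hne
  exact Finset.disjoint_left.mpr fun v hv hv' =>
    hind e he e' he' hne v ⟨mem_toFinset.mp hv, mem_toFinset.mp hv'⟩

theorem forall_exists_mem_iff_card_eq [Fintype V] (hS : ∀ e ∈ S, ¬e.IsDiag)
    (hind : ∀ e ∈ S, ∀ e' ∈ S, e ≠ e' → ∀ v : V, ¬(v ∈ e ∧ v ∈ e')) :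
    (∀ v : V, ∃ e ∈ S, v ∈ e) ↔ Fintype.card V = 2 * #S := by
  rw [← card_biUnion_toFinset_of_pairwise_disjoint hS hind, eq_comm, Finset.card_eq_iff_eq_univ,
    Finset.eq_univ_iff_forall]
  simp only [Finset.mem_biUnion, mem_toFinset]

end Sym2

namespace SimpleGraph

variable {V : Type*} {G : SimpleGraph V} (P : Sym2 V → Bool)

namespace Walk

theorem even_countP_edges_cons_of_isPath
    (hcyc : ∀ (u : V) (c : G.Walk u u), c.IsCycle → Even (c.edges.countP P))
    {u w : V} (h : G.Adj u w) {p : G.Walk w u} (hp : p.IsPath) :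
    Even ((cons h p).edges.countP P) := by
  by_cases he : s(u, w) ∈ p.edges
  · rw [hp.eq_adj_toWalk_of_mem_edges (Sym2.eq_swap ▸ he)]
    simp [List.countP_cons, Sym2.eq_swap (a := w)]
  · exact hcyc u _ ((cons_isCycle_iff p h).mpr ⟨hp, he⟩)

theorem even_countP_edges_add_countP_edges_bypass [DecidableEq V]
    (hcyc : ∀ (u : V) (c : G.Walk u u), c.IsCycle → Even (c.edges.countP P))
    {u v : V} (p : G.Walk u v) :
    Even (p.edges.countP P + p.bypass.edges.countP P) := by
  induction p with
  | nil => simp [bypass]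
  | @cons u w v h q ih =>
    rw [bypass]
    split_ifs with hu
    -- `q.bypass` passes through `u`: its part up to `u` closes up with `h` into a loop
    · have hsplit := congrArg (fun r => r.edges.countP P) (q.bypass.take_spec hu)
      have hloop := even_countP_edges_cons_of_isPath P hcyc h
        (q.bypass_isPath.takeUntil hu)
      simp only [edges_append, List.countP_append] at hsplit
      simp only [edges_cons, List.countP_cons] at hloop ⊢
      rw [Nat.even_iff] at hloop ih ⊢
      omega
    · simp only [edges_cons, List.countP_cons]
      rw [Nat.even_iff] at ih ⊢
      omega

theorem even_countP_edges_of_forall_isCycle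
    (hcyc : ∀ (u : V) (c : G.Walk u u), c.IsCycle → Even (c.edges.countP P))
    {u : V} (c : G.Walk u u) : Even (c.edges.countP P) := by
  cases c with
  | nil => simp
  | cons h p =>
    have hloop := even_countP_edges_cons_of_isPath P hcyc h p.bypass_isPath
    have hbypass := even_countP_edges_add_countP_edges_bypass P hcyc p
    simp only [edges_cons, List.countP_cons] at hloop ⊢
    rw [Nat.even_iff] at hloop hbypass ⊢
    omega

theorem odd_countP_edges_iff {f : V → Bool}
    (hf : ∀ a b, G.Adj a b → (f a ≠ f b ↔ P s(a, b))) {u v : V} (p : G.Walk u v) :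
    Odd (p.edges.countP P) ↔ f u ≠ f v := by
  induction p with
  | nil => simp
  | @cons u w v h q ih =>
    have hstep := hf u w h
    rw [edges_cons, List.countP_cons]
    cases hP : P s(u, w) <;>
      simp only [hP, Bool.false_eq_true, ↓reduceIte, add_zero, Nat.odd_add_one, ih] at hstep ⊢ <;>
      revert hstep <;> cases f u <;> cases f w <;> cases f v <;> decide

end Walk

open Walk

theorem exists_coloring_of_forall_even_countP_edges
    (heven : ∀ (u : V) (c : G.Walk u u), Even (c.edges.countP P)) :
    ∃ f : V → Bool, ∀ a b, G.Adj a b → (f a ≠ f b ↔ P s(a, b)) := by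
  have root : ∀ v, G.Walk (G.connectedComponentMk v).out v := fun v =>
    (ConnectedComponent.eq.mp (Quot.out_eq (G.connectedComponentMk v))).some
  refine ⟨fun v => decide (Odd ((root v).edges.countP P)), fun a b hab => ?_⟩
  have hsame : (G.connectedComponentMk a).out = (G.connectedComponentMk b).out := by
    rw [ConnectedComponent.eq.mpr hab.reachable]
  have hloop := heven _ (((root a).copy hsame rfl).append (cons hab (root b).reverse))
  simp only [edges_append, edges_cons, edges_copy, edges_reverse, List.countP_append,
    List.countP_cons, List.countP_reverse] at hloop
  simp only [ne_eq, decide_eq_decide, ← Nat.not_even_iff_odd]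
  split_ifs at hloop with hP <;>
    simp only [Nat.even_add, Nat.even_add_one, add_zero] at hloop <;> simp only [hP] <;> tauto

theorem exists_coloring_iff_forall_isCycle_even_countP_edges :
    (∃ f : V → Bool, ∀ a b, G.Adj a b → (f a ≠ f b ↔ P s(a, b))) ↔
      ∀ (u : V) (c : G.Walk u u), c.IsCycle → Even (c.edges.countP P) := by
  constructor
  · rintro ⟨f, hf⟩ u c -
    exact Nat.not_odd_iff_even.mp fun hodd => (odd_countP_edges_iff P hf c).mp hodd rfl
  · exact fun hcyc => exists_coloring_of_forall_even_countP_edges P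
      fun _ => even_countP_edges_of_forall_isCycle P hcyc

theorem isBivariegated_iff_exists_forall_existsUnique :
    G.IsBivariegated ↔ ∃ f : V → Bool, ∀ v, ∃! w, f w ≠ f v ∧ G.Adj v w := by
  refine ⟨fun ⟨f, _, hf⟩ => ⟨f, hf⟩, fun ⟨f, hf⟩ => ?_⟩
  choose m hm hmu using hf
  have hmm : ∀ v, m (m v) = v := fun v => (hmu (m v) v ⟨(hm v).1.symm, (hm v).2.symm⟩).symm
  have hflip : ∀ v, f (m v) = !f v := fun v => Bool.eq_not.mpr (hm v).1
  refine ⟨f, ⟨fun x => ⟨m x, by simp [hflip, x.2]⟩, fun x => ⟨m x, by simp [hflip, x.2]⟩,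
    fun x => Subtype.ext (hmm x), fun x => Subtype.ext (hmm x)⟩, fun v => ⟨m v, hm v, hmu v⟩⟩

theorem ne_and_adj_iff_mk_mem {S : Finset (Sym2 V)} {f : V → Bool}
    (hSE : ∀ e ∈ S, e ∈ G.edgeSet) (hf : ∀ a b, G.Adj a b → (f a ≠ f b ↔ s(a, b) ∈ S))
    {v w : V} : f w ≠ f v ∧ G.Adj v w ↔ s(v, w) ∈ S :=
  ⟨fun ⟨hne, hadj⟩ => (hf v w hadj).mp hne.symm,
    fun he => ⟨((hf v w (hSE _ he)).mpr he).symm, hSE _ he⟩⟩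

end SimpleGraph

/-- A graph `B` on `2n` vertices is 2-variegated iff there is a set `S` of `n`
pairwise independent edges such that no cycle of `B` contains an odd number of
edges from `S`. -/
theorem bivariegated_iff_exists_special_edges
    {V : Type*} [Fintype V] [DecidableEq V] (B : SimpleGraph V) (n : ℕ)
    (hcard : Fintype.card V = 2 * n) :
    B.IsBivariegated ↔
      ∃ S : Finset (Sym2 V), S.card = n ∧
        (∀ e ∈ S, e ∈ B.edgeSet) ∧
        (∀ e ∈ S, ∀ f ∈ S, e ≠ f → ∀ v : V, ¬ (v ∈ e ∧ v ∈ f)) ∧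
        (∀ (v : V) (c : B.Walk v v), c.IsCycle →
          ¬ Odd ((c.edges.filter (fun e => decide (e ∈ S))).length)) := by
  -- the cycle condition becomes: some `f` has exactly the edges of `S` as bichromatic edges
  simp only [← List.countP_eq_length_filter, Nat.not_odd_iff_even,
    ← exists_coloring_iff_forall_isCycle_even_countP_edges, decide_eq_true_eq,
    isBivariegated_iff_exists_forall_existsUnique]
  constructor
  · rintro ⟨f, hf⟩
    set S := B.edgeFinset.filter fun e => ¬(e.map f).IsDiag
    have hSE : ∀ e ∈ S, e ∈ B.edgeSet := fun e he =>
      mem_edgeFinset.mp (Finset.mem_filter.mp he).1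
    have hfS : ∀ a b, B.Adj a b → (f a ≠ f b ↔ s(a, b) ∈ S) := fun a b hab => by simp [S, hab]
    have hmatch : ∀ v, ∃! w, s(v, w) ∈ S := fun v =>
      (existsUnique_congr fun _ => ne_and_adj_iff_mk_mem hSE hfS).mp (hf v)
    obtain ⟨hind, hcover⟩ := Sym2.forall_existsUnique_mk_mem_iff.mp hmatch
    have hS : ∀ e ∈ S, ¬e.IsDiag := fun e he => B.not_isDiag_of_mem_edgeSet (hSE e he)
    have hcardS := (Sym2.forall_exists_mem_iff_card_eq hS hind).mp hcover
    exact ⟨S, by omega, hSE, hind, f, hfS⟩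
  · rintro ⟨S, hcardS, hSE, hind, f, hfS⟩
    have hS : ∀ e ∈ S, ¬e.IsDiag := fun e he => B.not_isDiag_of_mem_edgeSet (hSE e he)
    have hcover := (Sym2.forall_exists_mem_iff_card_eq hS hind).mpr (by omega)
    have hmatch := Sym2.forall_existsUnique_mk_mem_iff.mpr ⟨hind, hcover⟩
    exact ⟨f, fun v =>
      (existsUnique_congr fun _ => ne_and_adj_iff_mk_mem hSE hfS).mpr (hmatch v)⟩
end

section
/- If a simple graph G contains an edge uv with deg(u) ≥ 3 and deg(v) ≥ 3, then the line graph L(G) is not a 2-variegated graph. -/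
open SimpleGraph
open scoped Classical

theorem lineGraph_not_bivariegated_of_edge_deg_ge_three
    {V : Type*} [Fintype V] (G : SimpleGraph V) (u v : V)
    (huv : G.Adj u v) (hu : 3 ≤ G.degree u) (hv : 3 ≤ G.degree v) :
    ¬ (G.lineGraph).IsBivariegated := by
  rintro ⟨f, -, h⟩
  -- all edges through a vertex of degree ≥ 3 get the same color
  have mono : ∀ x : V, 3 ≤ G.degree x → ∀ a b : G.edgeSet,
      x ∈ (a : Sym2 V) → x ∈ (b : Sym2 V) → f a = f b := by
    intro x hx a b hxa hxb
    by_contra hne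
    have hab : a ≠ b := fun hh => hne (by rw [hh])
    -- get endpoints of a, b other than x
    obtain ⟨a', ha'⟩ := Sym2.mem_iff_exists.mp hxa
    obtain ⟨b', hb'⟩ := Sym2.mem_iff_exists.mp hxb
    -- find a third neighbor
    have hcard : 1 ≤ (((G.neighborFinset x).erase a').erase b').card := by
      have h1 : (G.neighborFinset x).card - 1 ≤ ((G.neighborFinset x).erase a').card :=
        Finset.pred_card_le_card_erase
      have h2 : ((G.neighborFinset x).erase a').card - 1 ≤
          (((G.neighborFinset x).erase a').erase b').card :=
        Finset.pred_card_le_card_erase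
      have h3 : 3 ≤ (G.neighborFinset x).card := hx
      omega
    obtain ⟨w, hw⟩ := Finset.card_pos.mp hcard
    have hwb' : w ≠ b' := (Finset.mem_erase.mp hw).1
    have hwa' : w ≠ a' := (Finset.mem_erase.mp (Finset.mem_erase.mp hw).2).1
    have hwadj : G.Adj x w := by
      have := (Finset.mem_erase.mp (Finset.mem_erase.mp hw).2).2
      rwa [SimpleGraph.mem_neighborFinset] at this
    set d : G.edgeSet := ⟨s(x, w), hwadj⟩ with hd
    have hda : d ≠ a := by
      intro hh
      apply hwa'
      have : s(x, w) = s(x, a') := by rw [← ha']; exact congrArg Subtype.val hh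
      exact (Sym2.congr_right.mp this)
    have hdb : d ≠ b := by
      intro hh
      apply hwb'
      have : s(x, w) = s(x, b') := by rw [← hb']; exact congrArg Subtype.val hh
      exact (Sym2.congr_right.mp this)
    have hxd : x ∈ (d : Sym2 V) := by rw [hd]; exact Sym2.mem_mk_left x w
    -- d is adjacent to both a and b in the line graph
    have hadjda : (G.lineGraph).Adj a d :=
      lineGraph_adj_iff_exists.mpr ⟨Ne.symm hda, x, hxa, hxd⟩
    have hadjdb : (G.lineGraph).Adj b d :=
      lineGraph_adj_iff_exists.mpr ⟨Ne.symm hdb, x, hxb, hxd⟩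
    have hadjba : (G.lineGraph).Adj a b :=
      lineGraph_adj_iff_exists.mpr ⟨hab, x, hxa, hxb⟩
    obtain ⟨wa, -, hua⟩ := h a
    obtain ⟨wb, -, hub⟩ := h b
    by_cases hfd : f d = f a
    · have h1 : d = wb := hub d ⟨by rw [hfd]; exact hne, hadjdb⟩
      have h2 : a = wb := hub a ⟨hne, hadjba.symm⟩
      exact hda (h1.trans h2.symm)
    · have h1 : d = wa := hua d ⟨hfd, hadjda⟩
      have h2 : b = wa := hua b ⟨Ne.symm hne, hadjba⟩
      exact hdb (h1.trans h2.symm)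
  -- now derive contradiction at edge uv
  set e : G.edgeSet := ⟨s(u, v), huv⟩ with he
  obtain ⟨w, ⟨hfw, hadj⟩, -⟩ := h e
  obtain ⟨-, y, hye, hyw⟩ := lineGraph_adj_iff_exists.mp hadj
  have hue : u ∈ (e : Sym2 V) := Sym2.mem_mk_left u v
  have hve : v ∈ (e : Sym2 V) := Sym2.mem_mk_right u v
  rcases Sym2.mem_iff.mp hye with rfl | rfl
  · exact hfw (mono y hu w e hyw hue)
  · exact hfw (mono y hv w e hyw hve)
end

section
/- If a simple graph G contains an edge uv with deg(u) ≥ 3 and deg(v) = 1, then the line graph L(G) is not a 2-variegated graph. -/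
open SimpleGraph
open scoped Classical

/-!
The pendant edge `e = uv` has exactly one neighbour `w` of the other colour in `L(G)`, and `w`
must pass through `u`, since `e` is the only edge at `v`. A third edge `a` at `u` makes `e, w, a`
a triangle in `L(G)`. But when every vertex has at most one neighbour of the other colour, no
triangle has an edge joining the two colours.
-/

namespace SimpleGraph

variable {V W β : Type*}

theorem apply_eq_of_adj_of_adj_of_adj {H : SimpleGraph W} {f : W → β}
    (hf : ∀ x, {y | f y ≠ f x ∧ H.Adj x y}.Subsingleton) {x y z : W}
    (hxy : H.Adj x y) (hyz : H.Adj y z) (hxz : H.Adj x z) : f x = f y := by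
  by_contra hne
  by_cases hzx : f z = f x
  · exact hxz.ne (hf y ⟨hne, hxy.symm⟩ ⟨hzx ▸ hne, hyz⟩)
  · exact hyz.ne (hf x ⟨Ne.symm hne, hxy⟩ ⟨hzx, hxz⟩)

theorem eq_of_mem_of_degree_eq_one {G : SimpleGraph V} {u v : V}
    [Fintype (G.neighborSet v)] (huv : G.Adj u v) (hv : G.degree v = 1) {a : Sym2 V} (ha : a ∈ G.edgeSet)
    (hva : v ∈ a) : a = s(u, v) := by
  obtain ⟨y, rfl⟩ := Sym2.mem_iff_exists.mp hva
  have hyu : y = u := (degree_eq_one_iff_existsUnique_adj.mp hv).unique ha huv.symm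
  rw [hyu, Sym2.eq_swap]

theorem mem_of_lineGraph_adj_of_degree_eq_one {G : SimpleGraph V} {u v : V}
    [Fintype (G.neighborSet v)] (huv : G.Adj u v) (hv : G.degree v = 1) {w : G.edgeSet}
    (hw : G.lineGraph.Adj ⟨s(u, v), huv⟩ w) : u ∈ (w : Sym2 V) := by
  obtain ⟨hne, x, hx, hxw⟩ := lineGraph_adj_iff_exists.mp hw
  rcases Sym2.mem_iff.mp hx with rfl | rfl
  · exact hxw
  · exact absurd (Subtype.ext (eq_of_mem_of_degree_eq_one huv hv w.2 hxw).symm) hne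

theorem exists_mem_incidenceSet_ne_ne {G : SimpleGraph V} {u : V}
    [Fintype (G.neighborSet u)] (hu : 3 ≤ G.degree u) (a b : Sym2 V) :
    ∃ c ∈ G.incidenceSet u, c ≠ a ∧ c ≠ b := by
  classical
  have hcard : 1 < ((G.incidenceFinset u).erase a).card := by
    have := Finset.pred_card_le_card_erase (s := G.incidenceFinset u) (a := a)
    rw [card_incidenceFinset_eq_degree] at this
    omega
  obtain ⟨c, hc, hcb⟩ := Finset.exists_mem_ne hcard b
  obtain ⟨hca, hc⟩ := Finset.mem_erase.mp hc
  exact ⟨c, (mem_incidenceFinset G u c).mp hc, hca, hcb⟩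

end SimpleGraph

theorem lineGraph_not_bivariegated_of_edge_deg_three_one
    {V : Type*} [Fintype V] (G : SimpleGraph V) (u v : V)
    (huv : G.Adj u v) (hu : 3 ≤ G.degree u) (hv : G.degree v = 1) :
    ¬ (G.lineGraph).IsBivariegated := by
  rintro ⟨f, -, hf⟩
  have hcross : ∀ x, {y | f y ≠ f x ∧ G.lineGraph.Adj x y}.Subsingleton :=
    fun x _ hy _ hz => (hf x).unique hy hz
  let e : G.edgeSet := ⟨s(u, v), huv⟩
  obtain ⟨w, ⟨hfw, hew⟩, -⟩ := hf e
  have hwu : u ∈ (w : Sym2 V) := mem_of_lineGraph_adj_of_degree_eq_one huv hv hew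
  obtain ⟨a, ⟨ha, hua⟩, hae, haw⟩ := exists_mem_incidenceSet_ne_ne hu e w
  have hwa : G.lineGraph.Adj w ⟨a, ha⟩ :=
    lineGraph_adj_iff_exists.mpr ⟨fun h => haw (congrArg Subtype.val h).symm, u, hwu, hua⟩
  have hea : G.lineGraph.Adj e ⟨a, ha⟩ :=
    lineGraph_adj_iff_exists.mpr ⟨fun h => hae (congrArg Subtype.val h).symm, u, by simp [e], hua⟩
  exact hfw (apply_eq_of_adj_of_adj_of_adj hcross hew hwa hea).symm
end

section
/- If a simple graph G contains a cycle of length n with n ≡ 1, 2, or 3 (mod 4), then the line graph L(G) is not a 2-variegated graph. -/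
open SimpleGraph
open scoped Classical

lemma walk_edges_getElem {V : Type*} {G : SimpleGraph V} {u v : V} (p : G.Walk u v) :
    ∀ (i : ℕ) (hi : i < p.length),
      p.edges[i]'(by simpa using hi) = s(p.getVert i, p.getVert (i+1)) := by
  induction p with
  | nil => intro i hi; simp at hi
  | cons h q ih =>
    intro i hi
    cases i with
    | zero => simp [Walk.getVert]
    | succ i =>
      simp only [Walk.edges_cons, Walk.getVert_cons_succ, List.getElem_cons_succ]
      exact ih i (by simpa [Nat.succ_lt_succ_iff] using hi)

theorem lineGraph_not_bivariegated_of_cycle_length_not_zero_mod_four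
    {V : Type*} [Fintype V] (G : SimpleGraph V) (n : ℕ) (v : V)
    (c : G.Walk v v) (hc : c.IsCycle) (hlen : c.length = n)
    (hmod : n % 4 = 1 ∨ n % 4 = 2 ∨ n % 4 = 3) :
    ¬ (G.lineGraph).IsBivariegated := by
  rintro ⟨f, -, hf⟩
  have hn3 : 3 ≤ n := hlen ▸ hc.three_le_length
  have hn0 : 0 < n := by omega
  have hadj : ∀ i : ℕ, G.Adj (c.getVert (i % n)) (c.getVert (i % n + 1)) := fun i =>
    c.adj_getVert_succ (by rw [hlen]; exact Nat.mod_lt _ hn0)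
  set φ : ℕ → G.edgeSet :=
    fun i => ⟨s(c.getVert (i % n), c.getVert (i % n + 1)), G.mem_edgeSet.mpr (hadj i)⟩ with hφ
  have hmodlt : ∀ i : ℕ, i % n < c.edges.length := by
    intro i; rw [Walk.length_edges, hlen]; exact Nat.mod_lt _ hn0
  have hE : ∀ i : ℕ, (φ i : Sym2 V) = c.edges[i % n]'(hmodlt i) := by
    intro i
    rw [walk_edges_getElem c (i % n) (by rw [hlen]; exact Nat.mod_lt _ hn0)]
  have hne : ∀ i j : ℕ, i % n ≠ j % n → φ i ≠ φ j := by
    intro i j h hcon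
    apply h
    have h2 : c.edges[i % n]'(hmodlt i) = c.edges[j % n]'(hmodlt j) := by
      rw [← hE, ← hE, hcon]
    exact (hc.edges_nodup.getElem_inj_iff).mp h2
  have hmod_ne : ∀ (i k : ℕ), 0 < k → k < n → (i + k) % n ≠ i % n := by
    intro i k hk1 hk2 h
    have h2 : i ≡ i + k [MOD n] := h.symm
    have h3 : n ∣ i + k - i := (Nat.modEq_iff_dvd' (Nat.le_add_right i k)).mp h2
    have h4 : n ≤ k := Nat.le_of_dvd hk1 (by simpa using h3)
    omega
  have hshift : ∀ i : ℕ, c.getVert ((i+1) % n) = c.getVert (i % n + 1) := by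
    intro i
    have h1 : (i + 1) % n = (i % n + 1) % n := (Nat.mod_add_mod i n 1).symm
    by_cases hlt : i % n + 1 < n
    · rw [h1, Nat.mod_eq_of_lt hlt]
    · have heq : i % n + 1 = n := by have := Nat.mod_lt i hn0; omega
      rw [h1, heq, Nat.mod_self, Walk.getVert_zero, ← hlen, Walk.getVert_length]
  have hadjL : ∀ i : ℕ, (G.lineGraph).Adj (φ i) (φ (i+1)) := by
    intro i
    rw [lineGraph_adj_iff_exists]
    refine ⟨(hne (i+1) i (hmod_ne i 1 (by omega) (by omega))).symm,
      c.getVert (i % n + 1), ?_, ?_⟩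
    · show c.getVert (i % n + 1) ∈ s(c.getVert (i % n), c.getVert (i % n + 1))
      exact Sym2.mem_mk_right _ _
    · show c.getVert (i % n + 1) ∈ s(c.getVert ((i+1) % n), c.getVert ((i+1) % n + 1))
      rw [hshift]
      exact Sym2.mem_mk_left _ _
  have hkey : ∀ i : ℕ, f (φ (i+2)) = ! f (φ i) := by
    intro i
    have h01 : (G.lineGraph).Adj (φ i) (φ (i+1)) := hadjL i
    have h12 : (G.lineGraph).Adj (φ (i+1)) (φ (i+2)) := by
      have := hadjL (i+1); convert this using 2 <;> omega
    have hne02 : φ i ≠ φ (i+2) := (hne (i+2) i (hmod_ne i 2 (by omega) (by omega))).symm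
    have hne01 : φ i ≠ φ (i+1) := (hne (i+1) i (hmod_ne i 1 (by omega) (by omega))).symm
    have hne12 : φ (i+1) ≠ φ (i+2) := by
      have := (hne (i+2) (i+1) (hmod_ne (i+1) 1 (by omega) (by omega))).symm
      convert this using 3 <;> omega
    by_contra hcon
    have hd : f (φ (i+2)) = f (φ i) := by
      cases hb2 : f (φ (i+2)) <;> cases hb0 : f (φ i) <;> simp_all
    by_cases hb : f (φ (i+1)) = f (φ i)
    · -- three consecutive same color
      obtain ⟨g, ⟨hgf, hgadj⟩, -⟩ := hf (φ (i+1))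
      obtain ⟨hgne, x, hx1, hx2⟩ := lineGraph_adj_iff_exists.mp hgadj
      have hx1' : x = c.getVert ((i+1) % n) ∨ x = c.getVert ((i+1) % n + 1) :=
        Sym2.mem_iff.mp hx1
      rcases hx1' with h | h
      · have hgi : (G.lineGraph).Adj g (φ i) := by
          rw [lineGraph_adj_iff_exists]
          refine ⟨?_, x, hx2, ?_⟩
          · intro he; rw [he] at hgf; exact hgf hb.symm
          · show x ∈ s(c.getVert (i % n), c.getVert (i % n + 1))
            rw [h, hshift]
            exact Sym2.mem_mk_right _ _
        obtain ⟨w, -, hu⟩ := hf g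
        have e1 := hu (φ i) ⟨by rw [← hb]; exact hgf.symm, hgi⟩
        have e2 := hu (φ (i+1)) ⟨hgf.symm, hgadj.symm⟩
        exact hne01 (e1.trans e2.symm)
      · have hb2 : f (φ (i+2)) = f (φ (i+1)) := by rw [hd, hb]
        have hgi : (G.lineGraph).Adj g (φ (i+2)) := by
          rw [lineGraph_adj_iff_exists]
          refine ⟨?_, x, hx2, ?_⟩
          · intro he; rw [he] at hgf; exact hgf hb2
          · show x ∈ s(c.getVert ((i+2) % n), c.getVert ((i+2) % n + 1))
            have h2 : c.getVert ((i+2) % n) = c.getVert ((i+1) % n + 1) := by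
              have := hshift (i+1); convert this using 3 <;> omega
            rw [h, ← h2]
            exact Sym2.mem_mk_left _ _
        obtain ⟨w, -, hu⟩ := hf g
        have e1 := hu (φ (i+2)) ⟨by rw [hb2]; exact hgf.symm, hgi⟩
        have e2 := hu (φ (i+1)) ⟨hgf.symm, hgadj.symm⟩
        exact hne12 (e2.trans e1.symm)
    · -- middle color differs from both
      obtain ⟨w, -, hu⟩ := hf (φ (i+1))
      have e1 := hu (φ i) ⟨fun h => hb h.symm, h01.symm⟩
      have e2 := hu (φ (i+2)) ⟨by rw [hd]; exact fun h => hb h.symm, h12⟩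
      exact hne02 (e1.trans e2.symm)
  have hper : ∀ k : ℕ, f (φ (2*k)) = if k % 2 = 0 then f (φ 0) else !(f (φ 0)) := by
    intro k
    induction k with
    | zero => simp
    | succ k ih =>
      have h2 : 2*(k+1) = 2*k + 2 := by ring
      rw [h2, hkey (2*k), ih]
      by_cases hk : k % 2 = 0
      · have h3 : (k+1) % 2 = 1 := by omega
        simp [hk, h3]
      · have h3 : (k+1) % 2 = 0 := by omega
        simp [hk, h3]
  have hperiod : ∀ i j : ℕ, i % n = j % n → φ i = φ j := by
    intro i j h
    apply Subtype.ext
    show s(c.getVert (i % n), c.getVert (i % n + 1)) = s(c.getVert (j % n), c.getVert (j % n + 1))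
    rw [h]
  by_cases hpar : n % 2 = 1
  · have h1 : f (φ (2*n)) = !(f (φ 0)) := by
      rw [hper n]
      simp [show ¬ (n % 2 = 0) by omega]
    have h2 : φ (2*n) = φ 0 := hperiod _ _ (by simp [Nat.mul_mod_right])
    rw [h2] at h1
    simp at h1
  · have hmod2 : n % 4 = 2 := by omega
    set m := n / 2 with hm
    have hn2 : n = 2 * m := by omega
    have hmo : ¬ (m % 2 = 0) := by omega
    have h1 : f (φ (2*m)) = !(f (φ 0)) := by rw [hper m]; simp [hmo]
    have h2 : φ (2*m) = φ 0 := hperiod _ _ (by rw [← hn2]; simp [Nat.mod_self])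
    rw [h2] at h1
    simp at h1
end

section
/- The cycle graph C_n is a 2-variegated graph if and only if n ≡ 0 (mod 4). -/
open SimpleGraph
open scoped Classical

/-!
`C_n` is the circulant graph on `Fin n` with jump `1`. For `n ≥ 3` the two neighbours of `x + 1`
are the distinct vertices `x` and `x + 2`, so a 2-colouring gives every vertex exactly one neighbour
of the other colour iff it changes colour under `x ↦ x + 2`; this translation then also matches the
two colour classes. A colouring that flips at every step of the orbit `0, 2, 4, …` can return to
its start only after an even number of steps; as `n • 2 = 0` in `Fin n`, `n` is even, and then
`(n / 2) • 2 = 0` makes `n / 2` even. Conversely, if `4 ∣ n`, colour `x` by whether `x mod 4 ≥ 2`.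
-/

theorem Bool.existsUnique_ne_and_eq_or_eq_iff {α : Type*} {p q : α} (hpq : p ≠ q) (f : α → Bool)
    (b : Bool) : (∃! w, f w ≠ b ∧ (w = p ∨ w = q)) ↔ f p ≠ f q := by
  constructor
  · rintro ⟨w, ⟨hw, rfl | rfl⟩, huniq⟩ hfpq
    · exact hpq (huniq q ⟨hfpq ▸ hw, .inr rfl⟩).symm
    · exact hpq (huniq p ⟨hfpq.symm ▸ hw, .inl rfl⟩)
  · intro hfpq
    have hbool : ∀ c d : Bool, c ≠ b → d ≠ b → c = d := by cases b <;> decide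
    by_cases hp : f p = b
    · refine ⟨q, ⟨hp ▸ hfpq.symm, .inr rfl⟩, ?_⟩
      rintro w ⟨hw, rfl | rfl⟩
      exacts [absurd hp hw, rfl]
    · refine ⟨p, ⟨hp, .inl rfl⟩, ?_⟩
      rintro w ⟨hw, rfl | rfl⟩
      exacts [rfl, absurd (hbool _ _ hp hw) hfpq]

theorem even_of_nsmul_eq_zero_of_forall_add_ne {M : Type*} [AddMonoid M] {f : M → Bool} {b : M}
    (hf : ∀ x, f (x + b) ≠ f x) {k : ℕ} (hk : k • b = 0) : Even k := by
  have hbool : ∀ c d e : Bool, c ≠ d → (c = e ↔ ¬d = e) := by decide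
  have hflip : ∀ k : ℕ, f (k • b) = f 0 ↔ Even k := by
    intro k
    induction k with
    | zero => simp
    | succ k ih => rw [succ_nsmul, Nat.even_add_one, ← ih]; exact hbool _ _ _ (hf _)
  exact (hflip k).1 (by rw [hk])

theorem nonempty_subtype_true_equiv_false_of_forall_add_ne {M : Type*} [AddGroup M]
    {f : M → Bool} {b : M} (hf : ∀ x, f (x + b) ≠ f x) :
    Nonempty ({x // f x = true} ≃ {x // f x = false}) :=
  ⟨(Equiv.addRight b).subtypeEquiv fun x => by
    rw [Equiv.coe_addRight, Bool.eq_not_iff.mpr (hf x)]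
    cases f x <;> simp⟩

namespace SimpleGraph

variable {G : Type*} [AddCommGroup G] {a : G}

theorem circulantGraph_singleton_adj_iff (ha : a ≠ 0) {u v : G} :
    (circulantGraph {a}).Adj u v ↔ v = u - a ∨ v = u + a := by
  rw [circulantGraph_adj, Set.mem_singleton_iff, Set.mem_singleton_iff, sub_eq_iff_eq_add',
    sub_eq_iff_eq_add', eq_sub_iff_add_eq', eq_comm (b := v + a)]
  grind

theorem circulantGraph_singleton_forall_existsUnique_ne_adj_iff (ha : a + a ≠ 0) (f : G → Bool) :
    (∀ v, ∃! w, f w ≠ f v ∧ (circulantGraph {a}).Adj v w) ↔ ∀ x, f (x + (a + a)) ≠ f x := by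
  have ha' : a ≠ 0 := by rintro rfl; simp at ha
  have hne : ∀ v : G, v - a ≠ v + a := fun v h => ha (by
    rw [sub_eq_iff_eq_add, add_assoc] at h; exact left_eq_add.mp h)
  simp_rw [circulantGraph_singleton_adj_iff ha', Bool.existsUnique_ne_and_eq_or_eq_iff (hne _)]
  refine ⟨fun h x => ?_, fun h v => ?_⟩
  · simpa [add_assoc] using (h (x + a)).symm
  · simpa [sub_add_eq_add_sub, add_sub_assoc] using (h (v - a)).symm

theorem circulantGraph_singleton_isBivariegated_iff (ha : a + a ≠ 0) :
    (circulantGraph {a}).IsBivariegated ↔ ∃ f : G → Bool, ∀ x, f (x + (a + a)) ≠ f x :=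
  ⟨fun ⟨f, _, hf⟩ => ⟨f, (circulantGraph_singleton_forall_existsUnique_ne_adj_iff ha f).1 hf⟩,
    fun ⟨f, hf⟩ => ⟨f, nonempty_subtype_true_equiv_false_of_forall_add_ne hf,
      (circulantGraph_singleton_forall_existsUnique_ne_adj_iff ha f).2 hf⟩⟩

end SimpleGraph

namespace Fin

theorem four_dvd_of_forall_add_two_ne {n : ℕ} [NeZero n] {f : Fin n → Bool}
    (hf : ∀ x, f (x + 2) ≠ f x) : 4 ∣ n := by
  have hzero : ∀ k : ℕ, n ∣ 2 * k → k • (2 : Fin n) = 0 := by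
    intro k hk
    open Fin.CommRing in
    simpa [Fin.ext_iff, nsmul_eq_mul, Fin.val_mul, Nat.dvd_iff_mod_eq_zero, mul_comm] using hk
  obtain ⟨t, rfl⟩ :=
    (even_of_nsmul_eq_zero_of_forall_add_ne hf (hzero n (dvd_mul_left _ _))).two_dvd
  obtain ⟨s, rfl⟩ := (even_of_nsmul_eq_zero_of_forall_add_ne hf (hzero t dvd_rfl)).two_dvd
  exact ⟨s, by ring⟩

theorem exists_forall_add_two_ne_of_four_dvd {n : ℕ} [NeZero n] (hn : 4 ∣ n) :
    ∃ f : Fin n → Bool, ∀ x, f (x + 2) ≠ f x := by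
  refine ⟨fun x => decide (2 ≤ x.val % 4), fun x => ?_⟩
  have h2 : (2 : Fin n).val = 2 := by
    simp [Nat.mod_eq_of_lt (show 2 < n by have := Nat.le_of_dvd (NeZero.pos n) hn; omega)]
  simp only [Fin.val_add, h2, Nat.mod_mod_of_dvd _ hn, ne_eq, decide_eq_decide]
  omega

end Fin

theorem cycleGraph_bivariegated_iff (n : ℕ) (hn : 3 ≤ n) :
    (cycleGraph n).IsBivariegated ↔ n % 4 = 0 := by
  obtain ⟨m, rfl⟩ : ∃ m, n = m + 2 + 1 := ⟨n - 3, by omega⟩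
  have htwo : (1 : Fin (m + 2 + 1)) + 1 = 2 := rfl
  have htwo_ne : (2 : Fin (m + 2 + 1)) ≠ 0 := by
    simp [Fin.ext_iff, Nat.mod_eq_of_lt (show 2 < m + 2 + 1 by omega)]
  rw [cycleGraph_eq_circulantGraph, circulantGraph_singleton_isBivariegated_iff (htwo ▸ htwo_ne),
    htwo, ← Nat.dvd_iff_mod_eq_zero]
  exact ⟨fun ⟨_, hf⟩ => Fin.four_dvd_of_forall_add_two_ne hf,
    Fin.exists_forall_add_two_ne_of_four_dvd⟩
end

section
/- If the line graph L(G) of a simple graph G is a 2-variegated graph on 2n vertices, then G has exactly 2n edges and contains n pairwise edge-disjoint induced paths ⟨x y z⟩ of length 2 whose middle vertices y have degree 2 in G, covering all edges of G. -/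
open SimpleGraph
open scoped Classical

/-!
In a 2-variegated graph every vertex `v` has a unique neighbor `partner v` of the other color.
Uniqueness makes `partner` a color-swapping involution, and it forbids `v` and `partner v` to
have a common neighbor. In `L(G)` an edge `e = xy` and its partner `e' = yz` share a vertex `y`;
a third edge at `y`, or an edge `xz`, would be a common neighbor of `e` and `e'`. So `deg y = 2`
and `⟨x y z⟩` is induced, and the pairs `{e, partner e}` with `e` of the first color split the
`2n` edges into `n` such paths.
-/

namespace SimpleGraph

section Partner

variable {W : Type*} {H : SimpleGraph W} {f : W → Bool}
  (hf : ∀ v, ∃! w, f w ≠ f v ∧ H.Adj v w)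

noncomputable def partner (v : W) : W := (hf v).exists.choose

variable {v w : W}

theorem partner_color_ne : f (partner hf v) ≠ f v := (hf v).exists.choose_spec.1

theorem adj_partner : H.Adj v (partner hf v) := (hf v).exists.choose_spec.2

theorem eq_partner_of_adj (hfw : f w ≠ f v) (hvw : H.Adj v w) : w = partner hf v :=
  (hf v).unique ⟨hfw, hvw⟩ ⟨partner_color_ne hf, adj_partner hf⟩

theorem partner_involutive : Function.Involutive (partner hf) := fun _ =>
  (eq_partner_of_adj hf (partner_color_ne hf).symm (adj_partner hf).symm).symm

theorem commonNeighbors_partner_eq_empty : H.commonNeighbors v (partner hf v) = ∅ := by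
  refine Set.eq_empty_of_forall_notMem fun w hw => ?_
  obtain ⟨hvw, hpw⟩ := H.mem_commonNeighbors.1 hw
  by_cases hfw : f w = f v
  · have hw : w = partner hf (partner hf v) :=
      eq_partner_of_adj hf (hfw ▸ (partner_color_ne hf).symm) hpw
    exact hvw.ne (hw.trans (partner_involutive hf v)).symm
  · exact hpw.ne' (eq_partner_of_adj hf hfw hvw)

end Partner

section LineGraph

variable {V : Type*} {G : SimpleGraph V}

theorem exists_eq_pair_of_lineGraph_adj {e e' : G.edgeSet} (h : G.lineGraph.Adj e e') :
    ∃ x y z, x ≠ z ∧ (e : Sym2 V) = s(x, y) ∧ (e' : Sym2 V) = s(y, z) := by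
  obtain ⟨hne, y, hye, hye'⟩ := lineGraph_adj_iff_exists.1 h
  refine ⟨Sym2.Mem.other hye, y, Sym2.Mem.other hye', fun hxz => hne (Subtype.ext ?_),
    by rw [Sym2.eq_swap, Sym2.other_spec], (Sym2.other_spec hye').symm⟩
  rw [← Sym2.other_spec hye, ← Sym2.other_spec hye', hxz]

variable {e e' : G.edgeSet} {x y z : V}

theorem not_adj_of_commonNeighbors_lineGraph_eq_empty (he : (e : Sym2 V) = s(x, y))
    (he' : (e' : Sym2 V) = s(y, z)) (h : G.lineGraph.commonNeighbors e e' = ∅) :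
    ¬ G.Adj x z := by
  intro hxz
  have hxy : G.Adj x y := G.mem_edgeSet.1 (he ▸ e.2)
  have hyz : G.Adj y z := G.mem_edgeSet.1 (he' ▸ e'.2)
  refine Set.eq_empty_iff_forall_notMem.1 h ⟨s(x, z), hxz⟩ ⟨?_, ?_⟩ <;>
    refine lineGraph_adj_iff_exists.2 ⟨fun heq => ?_, ?_⟩
  · simp [← Subtype.val_inj, he, hxy.ne', hyz.ne] at heq
  · exact ⟨x, by simp [he], by simp⟩
  · simp [← Subtype.val_inj, he', hxy.ne', hyz.ne] at heq
  · exact ⟨z, by simp [he'], by simp⟩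

theorem degree_eq_two_of_commonNeighbors_lineGraph_eq_empty [Fintype V]
    (he : (e : Sym2 V) = s(x, y)) (he' : (e' : Sym2 V) = s(y, z)) (hxz : x ≠ z)
    (h : G.lineGraph.commonNeighbors e e' = ∅) : G.degree y = 2 := by
  have hincidence : G.incidenceFinset y = {s(x, y), s(y, z)} := by
    ext g
    simp only [mem_incidenceFinset, Finset.mem_insert, Finset.mem_singleton]
    refine ⟨fun ⟨hg, hyg⟩ => ?_, ?_⟩
    · by_contra! hne
      refine Set.eq_empty_iff_forall_notMem.1 h ⟨g, hg⟩ ⟨?_, ?_⟩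
      · exact lineGraph_adj_iff_exists.2
          ⟨fun heq => hne.1 (by rw [← he, heq]), y, by simp [he], hyg⟩
      · exact lineGraph_adj_iff_exists.2
          ⟨fun heq => hne.2 (by rw [← he', heq]), y, by simp [he'], hyg⟩
    · rintro (rfl | rfl)
      · exact ⟨he ▸ e.2, by simp⟩
      · exact ⟨he' ▸ e'.2, by simp⟩
  rw [← card_incidenceFinset_eq_degree, hincidence, Finset.card_pair]
  simp only [ne_eq, Sym2.eq_iff, not_or, not_and]
  exact ⟨fun hxy hyz => hxz (hxy.trans hyz), fun h => absurd h hxz⟩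

end LineGraph

end SimpleGraph

section ColorSwappingInvolution

variable {W β : Type*} {f : W → Bool} {m : W → W}

theorem card_filter_eq_true_of_equiv [Fintype W] {n : ℕ}
    (e : {v // f v = true} ≃ {v // f v = false}) (hcard : Fintype.card W = 2 * n) :
    (Finset.univ.filter (f · = true)).card = n := by
  have hhalves := Fintype.card_congr e
  have hsplit := Fintype.card_subtype_compl (fun v => f v = true)
  have hle := Fintype.card_subtype_le (fun v => f v = true)
  simp only [Bool.not_eq_true] at hsplit
  rw [← Fintype.card_subtype]
  omega

theorem exists_color_eq_true_of_involutive (hm : Function.Involutive m)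
    (hfm : ∀ v, f (m v) ≠ f v) (w : W) : ∃ v, f v = true ∧ (v = w ∨ m v = w) := by
  cases hw : f w
  · exact ⟨m w, by simpa [hw] using hfm w, Or.inr (hm w)⟩
  · exact ⟨w, hw, Or.inl rfl⟩

theorem disjoint_pair_of_color_eq_true [DecidableEq β] (hm : Function.Involutive m)
    (hfm : ∀ v, f (m v) ≠ f v) {φ : W → β} (hφ : φ.Injective) {v w : W} (hv : f v = true)
    (hw : f w = true) (hvw : v ≠ w) :
    Disjoint ({φ v, φ (m v)} : Finset β) {φ w, φ (m w)} := by
  simp only [Finset.disjoint_insert_left, Finset.disjoint_singleton_left, Finset.mem_insert,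
    Finset.mem_singleton, hφ.eq_iff, hm.injective.eq_iff, not_or]
  refine ⟨⟨hvw, fun h => hfm w ?_⟩, fun h => hfm v ?_, hvw⟩
  · rw [← h, hv, hw]
  · rw [h, hv, hw]

theorem biUnion_pair_filter_color_eq_true [Fintype W] [DecidableEq β]
    (hm : Function.Involutive m) (hfm : ∀ v, f (m v) ≠ f v) (φ : W → β) :
    (Finset.univ.filter (f · = true)).biUnion (fun v => ({φ v, φ (m v)} : Finset β)) =
      Finset.univ.image φ := by
  ext b
  simp only [Finset.mem_biUnion, Finset.mem_filter, Finset.mem_univ, true_and,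
    Finset.mem_insert, Finset.mem_singleton, Finset.mem_image]
  constructor
  · rintro ⟨v, -, rfl | rfl⟩ <;> exact ⟨_, rfl⟩
  · rintro ⟨w, rfl⟩
    obtain ⟨v, hv, rfl | rfl⟩ := exists_color_eq_true_of_involutive hm hfm w
    exacts [⟨v, hv, Or.inl rfl⟩, ⟨v, hv, Or.inr rfl⟩]

end ColorSwappingInvolution

theorem exists_disjoint_induced_paths_of_lineGraph_bivariegated
    {V : Type*} [Fintype V] [DecidableEq V] (G : SimpleGraph V) (n : ℕ)
    (hcard : Fintype.card G.edgeSet = 2 * n)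
    (h : (G.lineGraph).IsBivariegated) :
    G.edgeFinset.card = 2 * n ∧
    ∃ P : Finset (V × V × V), P.card = n ∧
      (∀ p ∈ P, G.Adj p.1 p.2.1 ∧ G.Adj p.2.1 p.2.2 ∧ ¬ G.Adj p.1 p.2.2 ∧
        G.degree p.2.1 = 2) ∧
      (∀ p ∈ P, ∀ q ∈ P, p ≠ q →
        Disjoint ({s(p.1, p.2.1), s(p.2.1, p.2.2)} : Finset (Sym2 V))
          ({s(q.1, q.2.1), s(q.2.1, q.2.2)} : Finset (Sym2 V))) ∧
      (P.biUnion fun p => ({s(p.1, p.2.1), s(p.2.1, p.2.2)} : Finset (Sym2 V)))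
        = G.edgeFinset := by
  obtain ⟨f, ⟨eqv⟩, hf⟩ := h
  have hm := partner_involutive hf
  have hfm : ∀ e, f (partner hf e) ≠ f e := fun _ => partner_color_ne hf
  choose x y z hxz hx hz using fun e => exists_eq_pair_of_lineGraph_adj (adj_partner hf (v := e))
  have hpair (e : G.edgeSet) : ({s(x e, y e), s(y e, z e)} : Finset (Sym2 V)) =
      {(e : Sym2 V), ((partner hf e : G.edgeSet) : Sym2 V)} := by
    rw [hx, hz]
  let t (e : G.edgeSet) : V × V × V := (x e, y e, z e)
  have ht : t.Injective := fun e e' hee' => by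
    simp only [t, Prod.mk.injEq] at hee'
    rw [← Subtype.val_inj, hx, hx, hee'.1, hee'.2.1]
  refine ⟨by rwa [edgeFinset, Set.toFinset_card],
    (Finset.univ.filter (f · = true)).image t, ?_, ?_, ?_, ?_⟩
  · rw [Finset.card_image_of_injective _ ht, card_filter_eq_true_of_equiv eqv hcard]
  · simp only [Finset.mem_image]
    rintro _ ⟨e, -, rfl⟩
    have hnc := commonNeighbors_partner_eq_empty hf (v := e)
    exact ⟨G.mem_edgeSet.1 (hx e ▸ e.2), G.mem_edgeSet.1 (hz e ▸ (partner hf e).2),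
      not_adj_of_commonNeighbors_lineGraph_eq_empty (hx e) (hz e) hnc,
      degree_eq_two_of_commonNeighbors_lineGraph_eq_empty (hx e) (hz e) (hxz e) hnc⟩
  · simp only [Finset.mem_image, Finset.mem_filter, Finset.mem_univ, true_and]
    rintro _ ⟨e, he, rfl⟩ _ ⟨e', he', rfl⟩ hne
    rw [hpair, hpair]
    exact disjoint_pair_of_color_eq_true hm hfm Subtype.val_injective he he' (ne_of_apply_ne t hne)
  · rw [Finset.image_biUnion, Finset.biUnion_congr rfl fun e _ => hpair e,
      biUnion_pair_filter_color_eq_true hm hfm]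
    ext g
    simp
end

section
/- If G is a path graph with an odd number q of edges, then the line graph L(G) is not a 2-variegated graph. -/
open SimpleGraph
open scoped Classical

lemma edgeSet_pathGraph_card (q : ℕ) :
    Fintype.card ((pathGraph (q + 1)).edgeSet) = q := by
  have hbij : Function.Bijective
      (fun i : Fin q => (⟨s(i.castSucc, i.succ), by
        rw [SimpleGraph.mem_edgeSet, pathGraph_adj]
        left; simp⟩ : (pathGraph (q + 1)).edgeSet)) := by
    constructor
    · intro a b hab
      simp only [Subtype.mk.injEq, Sym2.eq, Sym2.rel_iff', Prod.mk.injEq, Prod.swap_prod_mk] at hab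
      rcases hab with ⟨h1, _⟩ | ⟨h1, h2⟩
      · exact Fin.castSucc_injective _ h1
      · have h1' : (a : ℕ) = b + 1 := by simpa using congrArg Fin.val h1
        have h2' : (a : ℕ) + 1 = b := by simpa using congrArg Fin.val h2
        omega
    · rintro ⟨e, he⟩
      induction e using Sym2.ind with
      | _ u v =>
        rw [SimpleGraph.mem_edgeSet, pathGraph_adj] at he
        rcases he with h | h
        · have hu : (u : ℕ) < q := by omega
          refine ⟨⟨u, hu⟩, ?_⟩
          simp only [Subtype.mk.injEq]
          have : (⟨u, hu⟩ : Fin q).castSucc = u := by ext; simp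
          have h2 : (⟨u, hu⟩ : Fin q).succ = v := by ext; simp [h]
          rw [this, h2]
        · have hv : (v : ℕ) < q := by omega
          refine ⟨⟨v, hv⟩, ?_⟩
          simp only [Subtype.mk.injEq]
          have : (⟨v, hv⟩ : Fin q).castSucc = v := by ext; simp
          have h2 : (⟨v, hv⟩ : Fin q).succ = u := by ext; simp [h]
          rw [this, h2, Sym2.eq_swap]
  have := Fintype.card_of_bijective hbij
  simpa using this.symm

theorem lineGraph_pathGraph_not_bivariegated_of_odd (q : ℕ) (hq : Odd q) :
    ¬ ((pathGraph (q + 1)).lineGraph).IsBivariegated := by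
  rintro ⟨f, ⟨e⟩, -⟩
  obtain ⟨k, hk⟩ := hq
  have h1 : Fintype.card {v : (pathGraph (q + 1)).edgeSet // ¬ f v = true}
      = Fintype.card (pathGraph (q + 1)).edgeSet
        - Fintype.card {v : (pathGraph (q + 1)).edgeSet // f v = true} :=
    Fintype.card_subtype_compl _
  have h1' : Fintype.card {v : (pathGraph (q + 1)).edgeSet // f v = true}
      ≤ Fintype.card (pathGraph (q + 1)).edgeSet :=
    Fintype.card_subtype_le _
  have h2 : Fintype.card {v : (pathGraph (q + 1)).edgeSet // f v = false}
      = Fintype.card {v : (pathGraph (q + 1)).edgeSet // ¬ f v = true} :=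
    Fintype.card_congr (Equiv.subtypeEquivRight (fun v => by simp [Bool.not_eq_true]))
  have h3 := edgeSet_pathGraph_card q
  have heq : Fintype.card {v : (pathGraph (q + 1)).edgeSet // f v = true}
      = Fintype.card {v : (pathGraph (q + 1)).edgeSet // f v = false} :=
    Fintype.card_congr e
  omega
end

section
/- If G has a vertex of degree greater than 2, then L^2(G) = L(L(G)) is not a 2-variegated graph. -/
open SimpleGraph
open scoped Classical

/-- In a graph where every vertex has a unique "cross" neighbor, every triangle
is monochromatic. -/
lemma bivar_triangle_mono {W : Type*} {H : SimpleGraph W} {f : W → Bool}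
    (hf : ∀ v : W, ∃! w : W, f w ≠ f v ∧ H.Adj v w)
    {a b c : W} (hab : H.Adj a b) (hac : H.Adj a c) (hbc : H.Adj b c) :
    f a = f b ∧ f a = f c := by
  have key : ∀ a b c : W, H.Adj a b → H.Adj a c → H.Adj b c → f a = f b → f a = f c := by
    intro a b c hab hac hbc h
    by_contra hne
    have h1 : f a ≠ f c ∧ H.Adj c a := ⟨hne, hac.symm⟩
    have h2 : f b ≠ f c ∧ H.Adj c b := ⟨h ▸ hne, hbc.symm⟩
    exact hab.ne ((hf c).unique h1 h2)
  have hfab : f a = f b := by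
    by_contra hne
    by_cases hca : f a = f c
    · exact hne (key a c b hac hab hbc.symm hca)
    · have hcb : f b = f c := by
        cases hx : f a <;> cases hy : f b <;> cases hz : f c <;> simp_all
      exact hne (key b c a hbc hab.symm hac.symm hcb).symm
  exact ⟨hfab, key a b c hab hac hbc hfab⟩

/-- The core argument: if a graph has three distinct edges through a common vertex,
then its second line graph admits no "unique cross neighbor" 2-coloring. -/
lemma aux_no_bivar {V : Type*} (G : SimpleGraph V)
    (f : (G.lineGraph).edgeSet → Bool)
    (hf : ∀ v : (G.lineGraph).edgeSet, ∃! w : (G.lineGraph).edgeSet,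
      f w ≠ f v ∧ ((G.lineGraph).lineGraph).Adj v w)
    (E1 E2 E3 : G.edgeSet) (h12 : E1 ≠ E2) (h13 : E1 ≠ E3) (h23 : E2 ≠ E3)
    (u : V) (hu1 : u ∈ (E1 : Sym2 V)) (hu2 : u ∈ (E2 : Sym2 V))
    (hu3 : u ∈ (E3 : Sym2 V)) : False := by
  have hA12 : (G.lineGraph).Adj E1 E2 := lineGraph_adj_iff_exists.mpr ⟨h12, u, hu1, hu2⟩
  have hA13 : (G.lineGraph).Adj E1 E3 := lineGraph_adj_iff_exists.mpr ⟨h13, u, hu1, hu3⟩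
  have hA23 : (G.lineGraph).Adj E2 E3 := lineGraph_adj_iff_exists.mpr ⟨h23, u, hu2, hu3⟩
  set a : (G.lineGraph).edgeSet := ⟨s(E1, E2), hA12⟩ with ha
  set b : (G.lineGraph).edgeSet := ⟨s(E2, E3), hA23⟩ with hb
  set c : (G.lineGraph).edgeSet := ⟨s(E1, E3), hA13⟩ with hc
  have hav : (a : Sym2 G.edgeSet) = s(E1, E2) := rfl
  have hbv : (b : Sym2 G.edgeSet) = s(E2, E3) := rfl
  have hcv : (c : Sym2 G.edgeSet) = s(E1, E3) := rfl
  have hab : a ≠ b := by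
    intro h
    rw [Subtype.ext_iff, hav, hbv, Sym2.eq_iff] at h
    rcases h with ⟨h, -⟩ | ⟨h, -⟩
    · exact h12 h
    · exact h13 h
  have hac : a ≠ c := by
    intro h
    rw [Subtype.ext_iff, hav, hcv, Sym2.eq_iff] at h
    rcases h with ⟨-, h⟩ | ⟨h, -⟩
    · exact h23 h
    · exact h13 h
  have hbc : b ≠ c := by
    intro h
    rw [Subtype.ext_iff, hbv, hcv, Sym2.eq_iff] at h
    rcases h with ⟨h, -⟩ | ⟨-, h⟩
    · exact (h12 h.symm)
    · exact (h13 h.symm)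
  have hAab : ((G.lineGraph).lineGraph).Adj a b :=
    lineGraph_adj_iff_exists.mpr ⟨hab, E2, by rw [hav]; exact Sym2.mem_mk_right E1 E2,
      by rw [hbv]; exact Sym2.mem_mk_left E2 E3⟩
  have hAac : ((G.lineGraph).lineGraph).Adj a c :=
    lineGraph_adj_iff_exists.mpr ⟨hac, E1, by rw [hav]; exact Sym2.mem_mk_left E1 E2,
      by rw [hcv]; exact Sym2.mem_mk_left E1 E3⟩
  have hAbc : ((G.lineGraph).lineGraph).Adj b c :=
    lineGraph_adj_iff_exists.mpr ⟨hbc, E3, by rw [hbv]; exact Sym2.mem_mk_right E2 E3,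
      by rw [hcv]; exact Sym2.mem_mk_right E1 E3⟩
  obtain ⟨hmab, hmac⟩ := bivar_triangle_mono hf hAab hAac hAbc
  obtain ⟨x, ⟨hxf, hax⟩, -⟩ := hf a
  obtain ⟨hnax, E, hEa, hEx⟩ := lineGraph_adj_iff_exists.mp hax
  rw [hav, Sym2.mem_iff] at hEa
  rcases hEa with rfl | rfl
  · -- E = E1 : triangle a, c, x
    have hxc : x ≠ c := by
      intro h
      exact hxf (h ▸ hmac.symm)
    have hAcx : ((G.lineGraph).lineGraph).Adj c x :=
      lineGraph_adj_iff_exists.mpr ⟨hxc.symm, E,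
        by rw [hcv]; exact Sym2.mem_mk_left E E3, hEx⟩
    exact hxf (bivar_triangle_mono hf hAac hax hAcx).2.symm
  · -- E = E2 : triangle a, b, x
    have hxb : x ≠ b := by
      intro h
      exact hxf (h ▸ hmab.symm)
    have hAbx : ((G.lineGraph).lineGraph).Adj b x :=
      lineGraph_adj_iff_exists.mpr ⟨hxb.symm, E,
        by rw [hbv]; exact Sym2.mem_mk_left E E3, hEx⟩
    exact hxf (bivar_triangle_mono hf hAab hax hAbx).2.symm

theorem iterated_lineGraph_two_not_bivariegated_of_deg_gt_two
    {V : Type*} [Fintype V] (G : SimpleGraph V) (u : V)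
    (hu : 2 < G.degree u) :
    ¬ ((G.lineGraph).lineGraph).IsBivariegated := by
  rintro ⟨f, -, hf⟩
  rw [SimpleGraph.degree] at hu
  obtain ⟨v1, v2, v3, h1, h2, h3, h12, h13, h23⟩ := Finset.two_lt_card_iff.mp hu
  rw [SimpleGraph.mem_neighborFinset] at h1 h2 h3
  have hE12 : (⟨s(u, v1), h1⟩ : G.edgeSet) ≠ ⟨s(u, v2), h2⟩ := by
    intro h
    rw [Subtype.ext_iff, Sym2.eq_iff] at h
    rcases h with ⟨-, h⟩ | ⟨h, -⟩
    · exact h12 h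
    · exact h2.ne' h.symm
  have hE13 : (⟨s(u, v1), h1⟩ : G.edgeSet) ≠ ⟨s(u, v3), h3⟩ := by
    intro h
    rw [Subtype.ext_iff, Sym2.eq_iff] at h
    rcases h with ⟨-, h⟩ | ⟨h, -⟩
    · exact h13 h
    · exact h3.ne' h.symm
  have hE23 : (⟨s(u, v2), h2⟩ : G.edgeSet) ≠ ⟨s(u, v3), h3⟩ := by
    intro h
    rw [Subtype.ext_iff, Sym2.eq_iff] at h
    rcases h with ⟨-, h⟩ | ⟨h, -⟩
    · exact h23 h
    · exact h3.ne' h.symm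
  exact aux_no_bivar G f hf _ _ _ hE12 hE13 hE23 u
    (Sym2.mem_mk_left u v1) (Sym2.mem_mk_left u v2) (Sym2.mem_mk_left u v3)
end

section
/- Let 2n = n₁d₁ + n₂d₂ + ... + n_m d_m be a partition with 1 ≤ d_i ≤ n and n_i ≥ 1, such that the multiset of terms n_i·d_i can be split into two disjoint groups each summing to n (an admissible partition). Then the degree sequence consisting of d_i repeated n_i·d_i times, for i = 1, ..., m, is realizable as the degree sequence of a 2-variegated line graph on 2n vertices. -/
open SimpleGraph
open scoped Classical

/-- A graph is a line graph if it is isomorphic to the line graph of some simple graph. -/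
def SimpleGraph.IsLineGraph {V : Type*} (G : SimpleGraph V) : Prop :=
  ∃ (W : Type) (H : SimpleGraph W), Nonempty (G ≃g H.lineGraph)


/-!
Split the `2n` vertices into `nn i` disjoint cliques `K_{d i}` for each `i`, and put the cliques
indexed by `A` on one side and the others on the other side; both sides have `n` vertices.
Adding a perfect matching between the two sides raises every degree in `K_{d i}` from `d i - 1`
to `d i`, and the graph is 2-variegated because every clique lies within one side. It is the line
graph of the bipartite graph whose vertices are the cliques and the matching edges: a vertex is
the edge from its clique to its matching edge, and two vertices never share both, since matched
vertices lie on different sides.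
-/

open Finset Function

theorem Function.Involutive.sym2_eq_iff {V : Type*} {σ : V → V} (hσ : Involutive σ) {u v : V} :
    s(u, σ u) = s(v, σ v) ↔ u = v ∨ u = σ v := by
  rw [Sym2.eq_iff, hσ.eq_iff (x := u) (y := v)]
  grind

theorem Fintype.exists_involutive_of_two_mul_card_eq {V : Type*} [Fintype V]
    (s : V → Bool) (h : 2 * card {v // s v = true} = card V) :
    ∃ σ : V → V, Involutive σ ∧ ∀ v, s (σ v) = !s v := by
  have hcard : card {v // s v = true} = card {v // s v = false} := by
    simp_rw [← Bool.not_eq_true]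
    rw [card_subtype_compl]
    omega
  let φ := equivOfCardEq hcard
  have hφ x : s (φ x) = false := (φ x).2
  have hφsymm x : s (φ.symm x) = true := (φ.symm x).2
  let σ v := if hv : s v then (φ ⟨v, hv⟩ : V) else φ.symm ⟨v, by simpa using hv⟩
  refine ⟨σ, fun v => ?_, fun v => ?_⟩ <;> by_cases hv : s v <;> simp [σ, hv, hφ, hφsymm]

theorem Fintype.card_filter_sigma_fst_eq {V α : Type*} {β : α → Type*} [Fintype V]
    [∀ a, Fintype (β a)] [DecidableEq α] (e : V ≃ Sigma β) (a : α) :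
    #{v | (e v).1 = a} = card (β a) := by
  rw [← card_subtype]
  exact card_congr ((e.subtypeEquiv fun _ => Iff.rfl).trans (Equiv.sigmaSubtype a))

theorem Multiset.map_univ_sigma_fst {α γ : Type*} {β : α → Type*} [Fintype α]
    [∀ a, Fintype (β a)] (g : α → γ) :
    (univ : Finset (Sigma β)).val.map (fun x => g x.1)
      = ∑ a, replicate (Fintype.card (β a)) (g a) := by
  rw [← univ_sigma_univ]
  change (Multiset.sigma _ _).map _ = _
  simp only [Multiset.sigma, map_bind, map_map, comp_def, map_const', card_val, card_univ]
  rw [sum_eq_multiset_sum, bind, join]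

section CliqueVertex

variable {ι : Type*} [Fintype ι] (nn d : ι → ℕ)

/-- `⟨⟨i, j⟩, k⟩` is the `k`-th vertex of the `j`-th copy of `K_{d i}`. -/
abbrev CliqueVertex : Type _ := Σ p : (Σ i, Fin (nn i)), Fin (d p.1)

theorem card_cliqueVertex : Fintype.card (CliqueVertex nn d) = ∑ i, nn i * d i := by
  simp [Fintype.sum_sigma]

theorem card_cliqueVertex_fst_fst_mem [DecidableEq ι] (A : Finset ι) :
    Fintype.card {x : CliqueVertex nn d // x.1.1 ∈ A} = ∑ i ∈ A, nn i * d i := by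
  rw [Fintype.card_subtype, card_filter, Fintype.sum_sigma, Fintype.sum_sigma,
    ← sum_filter_add_sum_filter_not univ (· ∈ A)]
  simp +contextual

theorem map_univ_cliqueVertex :
    (univ : Finset (CliqueVertex nn d)).val.map (fun x => d x.1.1)
      = ∑ i, Multiset.replicate (nn i * d i) (d i) := by
  rw [Multiset.map_univ_sigma_fst (β := fun p : Σ i, Fin (nn i) => Fin (d p.1)) fun p => d p.1]
  simp [Fintype.sum_sigma, Multiset.nsmul_replicate]

end CliqueVertex

namespace SimpleGraph

theorem IsLineGraph.of_sym2 {V : Type*} {W : Type} (G : SimpleGraph V) (ψ : V → Sym2 W)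
    (hinj : Injective ψ) (hdiag : ∀ v, ¬ (ψ v).IsDiag)
    (hadj : ∀ u v, G.Adj u v ↔ u ≠ v ∧ ∃ w, w ∈ ψ u ∧ w ∈ ψ v) : G.IsLineGraph := by
  let H := fromEdgeSet (Set.range ψ)
  have hedge : H.edgeSet = Set.range ψ := by
    rw [edgeSet_fromEdgeSet, sdiff_eq_left, Set.disjoint_left]
    rintro _ ⟨v, rfl⟩
    exact hdiag v
  let e : V ≃ H.edgeSet := (Equiv.ofInjective ψ hinj).trans (Equiv.setCongr hedge.symm)
  refine ⟨W, H, ⟨e, fun {u v} => ?_⟩⟩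
  rw [lineGraph_adj_iff_exists, hadj, e.injective.ne_iff]
  rfl

variable {V C : Type*}

def cliqueMatchingGraph (c : V → C) (σ : V → V) : SimpleGraph V :=
  fromRel fun u v => c u = c v ∨ σ u = v

variable {c : V → C} {σ : V → V}

theorem cliqueMatchingGraph_adj (hσ : Involutive σ) {u v : V} :
    (cliqueMatchingGraph c σ).Adj u v ↔ u ≠ v ∧ (c u = c v ∨ σ u = v) := by
  rw [cliqueMatchingGraph, fromRel_adj, hσ.eq_iff (x := v), eq_comm (a := c v)]
  grind

theorem isLineGraph_cliqueMatchingGraph {V C : Type} {c : V → C} {σ : V → V}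
    (hσ : Involutive σ) (hc : ∀ v, c (σ v) ≠ c v) :
    (cliqueMatchingGraph c σ).IsLineGraph := by
  -- each vertex becomes the edge joining its clique to its matching edge
  refine IsLineGraph.of_sym2 _ (fun v => s(Sum.inl (c v), Sum.inr s(v, σ v)))
    (fun u v h => ?_) (fun v => by simp) (fun u v => ?_)
  · obtain ⟨hcuv, hr⟩ : c u = c v ∧ s(u, σ u) = s(v, σ v) := by simpa using h
    rcases hσ.sym2_eq_iff.1 hr with rfl | rfl
    · rfl
    · exact absurd hcuv (hc v)
  · rw [cliqueMatchingGraph_adj hσ]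
    simp only [Sym2.mem_iff, exists_eq_or_imp, exists_eq_left, reduceCtorEq, false_or, or_false,
      Sum.inl.injEq, Sum.inr.injEq, hσ.sym2_eq_iff, hσ.eq_iff (x := u)]
    grind

theorem degree_cliqueMatchingGraph [Fintype V] [DecidableEq C] (hσ : Involutive σ)
    (hc : ∀ v, c (σ v) ≠ c v) (v : V) [Fintype ((cliqueMatchingGraph c σ).neighborSet v)] :
    (cliqueMatchingGraph c σ).degree v = #{u | c u = c v} := by
  have hv : v ∈ ({u | c u = c v} : Finset V) := by simp
  have hnbr : (cliqueMatchingGraph c σ).neighborFinset v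
      = insert (σ v) (({u | c u = c v} : Finset V).erase v) := by
    ext u
    simp only [mem_neighborFinset, cliqueMatchingGraph_adj hσ, mem_insert, mem_erase, mem_filter,
      mem_univ, true_and]
    grind
  rw [← card_neighborFinset_eq_degree, hnbr, card_insert_of_notMem (by simp [hc v]),
    card_erase_add_one hv]

theorem isBivariegated_of_involutive {G : SimpleGraph V} {s : V → Bool} (hσ : Involutive σ)
    (hs : ∀ v, s (σ v) = !s v) (hadj : ∀ v w, s w ≠ s v → (G.Adj v w ↔ σ v = w)) :
    G.IsBivariegated :=
  ⟨s, ⟨hσ.toPerm.subtypeEquiv fun v => by simp [hs]⟩, fun v =>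
    ⟨σ v, ⟨by simp [hs], (hadj v _ (by simp [hs])).2 rfl⟩,
      fun w ⟨hw, hvw⟩ => ((hadj v w hw).1 hvw).symm⟩⟩

theorem isBivariegated_cliqueMatchingGraph {s : V → Bool} (hσ : Involutive σ)
    (hs : ∀ v, s (σ v) = !s v) (hcs : ∀ u v, c u = c v → s u = s v) :
    (cliqueMatchingGraph c σ).IsBivariegated :=
  isBivariegated_of_involutive hσ hs fun v w hw => by
    rw [cliqueMatchingGraph_adj hσ]
    constructor
    · rintro ⟨-, hcvw | rfl⟩
      · exact absurd (hcs _ _ hcvw).symm hw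
      · rfl
    · rintro rfl
      exact ⟨fun h => hw (h ▸ rfl), Or.inr rfl⟩

end SimpleGraph

theorem admissible_partition_realizable_as_bivariegated_lineGraph_general
    (n m : ℕ) (nn d : Fin m → ℕ)
    (hsum : ∑ i, nn i * d i = 2 * n)
    (hadm : ∃ A : Finset (Fin m), ∑ i ∈ A, nn i * d i = n) :
    ∃ G : SimpleGraph (Fin (2 * n)), G.IsLineGraph ∧ G.IsBivariegated ∧
      (Finset.univ.val.map fun v => G.degree v)
        = ∑ i : Fin m, Multiset.replicate (nn i * d i) (d i) := by
  obtain ⟨A, hA⟩ := hadm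
  let e : Fin (2 * n) ≃ CliqueVertex nn d :=
    Fintype.equivOfCardEq (by rw [card_cliqueVertex, hsum, Fintype.card_fin])
  let c w := (e w).1
  let s w := decide ((e w).1.1 ∈ A)
  have hcs : ∀ u v, c u = c v → s u = s v := fun u v h => by simp only [s, c] at h ⊢; rw [h]
  have htrue : Fintype.card {w // s w = true} = n :=
    (Fintype.card_congr (e.subtypeEquiv fun w => by simp [s])).trans
      ((card_cliqueVertex_fst_fst_mem nn d A).trans hA)
  obtain ⟨σ, hσ, hsσ⟩ :=
    Fintype.exists_involutive_of_two_mul_card_eq s (by rw [htrue, Fintype.card_fin])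
  have hc : ∀ v, c (σ v) ≠ c v := fun v h => by simpa [hsσ] using hcs _ _ h
  refine ⟨cliqueMatchingGraph c σ, isLineGraph_cliqueMatchingGraph hσ hc,
    isBivariegated_cliqueMatchingGraph hσ hsσ hcs, ?_⟩
  calc univ.val.map (fun v => (cliqueMatchingGraph c σ).degree v)
      = univ.val.map (fun w => d (e w).1.1) := Multiset.map_congr rfl fun w _ => by
        rw [degree_cliqueMatchingGraph hσ hc, Fintype.card_filter_sigma_fst_eq e, Fintype.card_fin]
    _ = ∑ i, Multiset.replicate (nn i * d i) (d i) := by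
        rw [← map_univ_cliqueVertex, ← map_univ_equiv e, map_val, Multiset.map_map]
        rfl

theorem admissible_partition_realizable_as_bivariegated_lineGraph
    (n m : ℕ) (nn d : Fin m → ℕ)
    (hd : ∀ i, 1 ≤ d i ∧ d i ≤ n) (hnn : ∀ i, 1 ≤ nn i)
    (hsum : ∑ i, nn i * d i = 2 * n)
    (hadm : ∃ A : Finset (Fin m), ∑ i ∈ A, nn i * d i = n) :
    ∃ G : SimpleGraph (Fin (2 * n)), G.IsLineGraph ∧ G.IsBivariegated ∧
      (Finset.univ.val.map fun v => G.degree v)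
        = ∑ i : Fin m, Multiset.replicate (nn i * d i) (d i) :=
  admissible_partition_realizable_as_bivariegated_lineGraph_general n m nn d hsum hadm
end

section
/- The line graph of the complete bipartite graph K(n,2), for n ≥ 3, is an n-regular 2-variegated graph on 2n vertices whose adjacency matrix has eigenvalues n, n−2, 0, and −2. -/
open SimpleGraph
open scoped Classical

/-!
Two edges `ab`, `a'b'` of `K(α, β)` meet iff `a = a'` or `b = b'`, so the line graph of
`K(α, β)` is the rook graph `K_α □ K_β`. For `β = Fin 2` this is a prism, which is 2-variegated
through the partition by the second coordinate, and it is regular of degree `(|α| - 1) + 1`.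

The adjacency matrix of the rook graph is `x + y - 2`, where `x = J ⊗ 1` and `y = 1 ⊗ J`
(`J` the all-ones matrix) commute and satisfy `x² = |α| x`, `y² = |β| y`; hence
`(x + y)(x + y - |α|)(x + y - |β|)(x + y - |α| - |β|) = 0`, which bounds the spectrum.
Conversely, products `u ⊗ w` of eigenvectors of `K_α` and `K_β`, with eigenvalues `|α| - 1`
(constant vectors) and `-1` (vectors of sum zero), realise all four values.
-/

open Matrix Polynomial
open scoped Kronecker

section Spectrum

variable {𝕜 A : Type*} [Field 𝕜] [Ring A] [Algebra 𝕜 A]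

theorem spectrum_subset_setOf_isRoot [Nontrivial A] {a : A} {p : 𝕜[X]} (hp : aeval a p = 0) :
    spectrum 𝕜 a ⊆ {μ | p.IsRoot μ} := fun μ hμ ↦ by
  simpa [hp, spectrum.zero_eq] using spectrum.subset_polynomial_aeval a p ⟨μ, hμ, rfl⟩

variable {x y : A} {a b : 𝕜}

theorem Commute.aeval_add_eq_zero (hxy : Commute x y) (hx : x * x = a • x)
    (hy : y * y = b • y) : aeval (x + y) (X * (X - C a) * (X - C b) * (X - C (a + b))) = 0 := by
  have h₁ : (x + y) * (x + y - a • 1) = 2 • (x * y) + (b - a) • y := by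
    simp only [mul_add, add_mul, mul_sub, mul_smul_comm, mul_one, hx, hy, hxy.eq]
    module
  have h₂ : (2 • (x * y) + (b - a) • y) * (x + y - b • 1) = (a + b) • (x * y) := by
    simp only [mul_add, add_mul, mul_sub, smul_mul_assoc, mul_smul_comm, mul_one, mul_assoc,
      hy, ← hxy.eq, ← mul_assoc x x, hx]
    module
  have h₃ : (x * y) * (x + y - (a + b) • 1) = 0 := by
    simp only [mul_add, mul_sub, mul_smul_comm, mul_one, mul_assoc, hy, ← hxy.eq,
      ← mul_assoc x x, hx, smul_mul_assoc]
    module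
  simp only [map_mul, map_sub, aeval_X, aeval_C, Algebra.algebraMap_eq_smul_one]
  rw [h₁, h₂, smul_mul_assoc, h₃, smul_zero]

theorem Commute.spectrum_add_subset [Nontrivial A] (hxy : Commute x y) (hx : x * x = a • x)
    (hy : y * y = b • y) : spectrum 𝕜 (x + y) ⊆ {0, a, b, a + b} := fun μ hμ ↦ by
  simpa [sub_eq_zero, or_assoc] using spectrum_subset_setOf_isRoot (hxy.aeval_add_eq_zero hx hy) hμ

end Spectrum

namespace Matrix

variable {ι l m n p R : Type*}

theorem mem_spectrum_iff_exists_mulVec_eq_smul [Fintype ι] [DecidableEq ι] [Field R]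
    {M : Matrix ι ι R} {μ : R} : μ ∈ spectrum R M ↔ ∃ v ≠ 0, M *ᵥ v = μ • v := by
  rw [spectrum.mem_iff, isUnit_iff_isUnit_det, isUnit_iff_ne_zero, not_not,
    ← exists_mulVec_eq_zero_iff]
  simp only [Algebra.algebraMap_eq_smul_one, sub_mulVec, smul_mulVec, one_mulVec, sub_eq_zero,
    eq_comm]

theorem kronecker_mulVec [CommSemiring R] [Fintype m] [Fintype p] (A : Matrix l m R)
    (B : Matrix n p R) (u : m → R) (w : p → R) :
    (A ⊗ₖ B) *ᵥ (fun q ↦ u q.1 * w q.2) = fun q ↦ (A *ᵥ u) q.1 * (B *ᵥ w) q.2 := by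
  ext ⟨i, k⟩
  simp only [mulVec, dotProduct, kronecker_apply, Fintype.sum_prod_type, Finset.sum_mul_sum]
  exact Finset.sum_congr rfl fun _ _ ↦ Finset.sum_congr rfl fun _ _ ↦ by ring

theorem of_one_mulVec [Fintype n] [NonAssocSemiring R] (u : n → R) :
    (of 1 : Matrix m n R) *ᵥ u = fun _ ↦ ∑ j, u j := by
  ext; simp [mulVec, dotProduct]

theorem of_one_mul_of_one [Fintype n] [NonAssocSemiring R] :
    (of 1 : Matrix m n R) * (of 1 : Matrix n p R) = (Fintype.card n : R) • of 1 := by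
  ext; simp [mul_apply]

end Matrix

namespace SimpleGraph

variable {α β V W : Type*}

abbrev rookGraph (α β : Type*) : SimpleGraph (α × β) := completeGraph α □ completeGraph β

noncomputable def completeBipartiteGraphEdgeEquiv (α β : Type*) :
    α × β ≃ (completeBipartiteGraph α β).edgeSet :=
  (Equiv.ofInjective (fun x : α × β ↦ s(.inl x.1, .inr x.2)) (by
    rintro ⟨a, b⟩ ⟨a', b'⟩ h
    simpa using h)).trans (Equiv.setCongr edgeSet_completeBipartiteGraph.symm)

@[simp]
theorem coe_completeBipartiteGraphEdgeEquiv (x : α × β) :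
    (completeBipartiteGraphEdgeEquiv α β x : Sym2 (α ⊕ β)) = s(.inl x.1, .inr x.2) := rfl

noncomputable def rookGraphIsoLineGraph (α β : Type*) :
    rookGraph α β ≃g (completeBipartiteGraph α β).lineGraph where
  toEquiv := completeBipartiteGraphEdgeEquiv α β
  map_rel_iff' := by
    rintro ⟨a, b⟩ ⟨a', b'⟩
    simp only [lineGraph_adj_iff_exists, ne_eq, EmbeddingLike.apply_eq_iff_eq,
      coe_completeBipartiteGraphEdgeEquiv, Sym2.mem_iff, boxProd_adj, top_adj, Prod.mk.injEq]
    constructor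
    · rintro ⟨hne, v, hv, hv'⟩
      rcases hv with rfl | rfl <;> rcases hv' with h | h <;> simp_all
    · rintro (⟨hne, rfl⟩ | ⟨hne, rfl⟩)
      · exact ⟨by simp [hne], .inr b, by simp⟩
      · exact ⟨by simp [hne], .inl a, by simp⟩

theorem Iso.isRegularOfDegree_iff {G : SimpleGraph V} {H : SimpleGraph W} [G.LocallyFinite]
    [H.LocallyFinite] (f : G ≃g H) {d : ℕ} : H.IsRegularOfDegree d ↔ G.IsRegularOfDegree d :=
  ⟨fun h v ↦ f.degree_eq v ▸ h (f v),
    fun h w ↦ f.apply_symm_apply w ▸ (f.degree_eq _).trans (h _)⟩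

theorem IsRegularOfDegree.boxProd {G : SimpleGraph α} {H : SimpleGraph β} [G.LocallyFinite]
    [H.LocallyFinite] {d e : ℕ} (hG : G.IsRegularOfDegree d) (hH : H.IsRegularOfDegree e) :
    (G □ H).IsRegularOfDegree (d + e) := fun x ↦ by
  rw [degree_boxProd, hG, hH]

theorem Iso.isBivariegated {G : SimpleGraph V} {H : SimpleGraph W} (f : G ≃g H)
    (hG : G.IsBivariegated) : H.IsBivariegated := by
  obtain ⟨c, ⟨e⟩, hc⟩ := hG
  refine ⟨c ∘ f.symm, ⟨?_⟩, fun w ↦ ?_⟩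
  · exact (f.symm.toEquiv.subtypeEquiv fun _ ↦ Iff.rfl).trans
      (e.trans (f.toEquiv.subtypeEquiv fun _ ↦ by simp))
  · obtain ⟨v, hv, huniq⟩ := hc (f.symm w)
    refine ⟨f v, by simpa [← f.symm.map_adj_iff] using hv, fun w' hw' ↦ ?_⟩
    rw [← f.apply_symm_apply w', huniq (f.symm w') (by simpa [← f.symm.map_adj_iff] using hw')]

theorem isBivariegated_boxProd_top_fin_two (G : SimpleGraph V) :
    (G □ (⊤ : SimpleGraph (Fin 2))).IsBivariegated := by
  have hflip (i j : Fin 2) : decide (j = 0) ≠ decide (i = 0) ↔ j = i + 1 := by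
    revert i j; decide
  have hswap (i : Fin 2) : decide (i = 0) = true ↔ decide (i + 1 = 0) = false := by
    revert i; decide
  refine ⟨fun x ↦ x.2 = 0, ⟨(Equiv.prodCongr (.refl V) (Equiv.addRight 1)).subtypeEquiv ?_⟩,
    fun x ↦ ⟨(x.1, x.2 + 1), by simp [hflip], ?_⟩⟩
  · rintro ⟨v, i⟩
    exact hswap i
  · rintro ⟨w, j⟩ ⟨hj, hadj⟩
    obtain rfl : j = x.2 + 1 := (hflip _ _).mp hj
    simp_all

section Spectrum

variable {𝕜 : Type*} [Field 𝕜]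

theorem Iso.spectrum_adjMatrix [Fintype V] [Fintype W] [DecidableEq V] [DecidableEq W]
    {G : SimpleGraph V} {H : SimpleGraph W} [DecidableRel G.Adj] [DecidableRel H.Adj]
    (f : G ≃g H) : spectrum 𝕜 (H.adjMatrix 𝕜) = spectrum 𝕜 (G.adjMatrix 𝕜) := by
  rw [← f.reindex_adjMatrix 𝕜]
  exact AlgEquiv.spectrum_eq (reindexAlgEquiv 𝕜 𝕜 f.toEquiv) _

theorem adjMatrix_boxProd {R : Type*} [Semiring R] [DecidableEq α] [DecidableEq β]
    (G : SimpleGraph α) (H : SimpleGraph β) [DecidableRel G.Adj] [DecidableRel H.Adj]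
    [DecidableRel (G □ H).Adj] :
    (G □ H).adjMatrix R = G.adjMatrix R ⊗ₖ 1 + 1 ⊗ₖ H.adjMatrix R := by
  ext ⟨a, b⟩ ⟨a', b'⟩
  by_cases ha : a = a' <;> by_cases hb : b = b' <;> simp [one_apply, ha, hb]

variable [Fintype α] [Fintype β] [DecidableEq α] [DecidableEq β]

theorem add_mem_spectrum_adjMatrix_boxProd {G : SimpleGraph α} {H : SimpleGraph β}
    [DecidableRel G.Adj] [DecidableRel H.Adj] [DecidableRel (G □ H).Adj] {μ ν : 𝕜}
    (hμ : μ ∈ spectrum 𝕜 (G.adjMatrix 𝕜)) (hν : ν ∈ spectrum 𝕜 (H.adjMatrix 𝕜)) :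
    μ + ν ∈ spectrum 𝕜 ((G □ H).adjMatrix 𝕜) := by
  obtain ⟨u, hu, hGu⟩ := mem_spectrum_iff_exists_mulVec_eq_smul.mp hμ
  obtain ⟨w, hw, hHw⟩ := mem_spectrum_iff_exists_mulVec_eq_smul.mp hν
  obtain ⟨a, ha⟩ := Function.ne_iff.mp hu
  obtain ⟨b, hb⟩ := Function.ne_iff.mp hw
  refine mem_spectrum_iff_exists_mulVec_eq_smul.mpr
    ⟨fun q ↦ u q.1 * w q.2, Function.ne_iff.mpr ⟨(a, b), mul_ne_zero ha hb⟩, ?_⟩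
  ext q
  simp only [adjMatrix_boxProd, add_mulVec, kronecker_mulVec, one_mulVec, hGu, hHw, Pi.add_apply,
    Pi.smul_apply, smul_eq_mul]
  ring

theorem card_sub_one_mem_spectrum_adjMatrix_top [Fintype V] [DecidableEq V] [Nonempty V] :
    (Fintype.card V - 1 : 𝕜) ∈ spectrum 𝕜 ((⊤ : SimpleGraph V).adjMatrix 𝕜) := by
  refine mem_spectrum_iff_exists_mulVec_eq_smul.mpr ⟨fun _ ↦ 1, one_ne_zero, ?_⟩
  rw [adjMatrix_completeGraph_eq_of_one_sub_one]
  ext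
  simp [sub_mulVec, of_one_mulVec]

theorem neg_one_mem_spectrum_adjMatrix_top [Fintype V] [DecidableEq V] [Nontrivial V] :
    (-1 : 𝕜) ∈ spectrum 𝕜 ((⊤ : SimpleGraph V).adjMatrix 𝕜) := by
  obtain ⟨i, j, hij⟩ := exists_pair_ne V
  refine mem_spectrum_iff_exists_mulVec_eq_smul.mpr
    ⟨Pi.single i 1 - Pi.single j 1, Function.ne_iff.mpr ⟨i, by simp [hij]⟩, ?_⟩
  rw [adjMatrix_completeGraph_eq_of_one_sub_one]
  ext
  simp [sub_mulVec, of_one_mulVec]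

theorem spectrum_adjMatrix_rookGraph_subset [DecidableRel (rookGraph α β).Adj] :
    spectrum 𝕜 ((rookGraph α β).adjMatrix 𝕜) ⊆
      {(Fintype.card α : 𝕜) + Fintype.card β - 2, (Fintype.card α : 𝕜) - 2,
        (Fintype.card β : 𝕜) - 2, -2} := by
  cases isEmpty_or_nonempty (α × β)
  · simp [spectrum.of_subsingleton]
  have hA : (rookGraph α β).adjMatrix 𝕜 = of 1 ⊗ₖ 1 + 1 ⊗ₖ of 1 - algebraMap 𝕜 _ 2 := by
    ext ⟨i, j⟩ ⟨i', j'⟩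
    by_cases hi : i = i' <;> by_cases hj : j = j' <;>
      simp [one_apply, hi, hj, Algebra.algebraMap_eq_smul_one, one_add_one_eq_two]
  have hcomm : Commute (of 1 ⊗ₖ 1 : Matrix (α × β) (α × β) 𝕜) (1 ⊗ₖ of 1) := by
    simp [Commute, SemiconjBy, ← mul_kronecker_mul]
  have hsub := hcomm.spectrum_add_subset
    (by rw [← mul_kronecker_mul, of_one_mul_of_one, one_mul, smul_kronecker])
    (by rw [← mul_kronecker_mul, of_one_mul_of_one, one_mul, kronecker_smul])
  rw [hA, ← spectrum.sub_singleton_eq]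
  rintro _ ⟨μ, hμ, _, rfl, rfl⟩
  rcases hsub hμ with rfl | rfl | rfl | rfl <;> simp

theorem spectrum_adjMatrix_rookGraph [Nontrivial α] [Nontrivial β]
    [DecidableRel (rookGraph α β).Adj] :
    spectrum 𝕜 ((rookGraph α β).adjMatrix 𝕜) =
      {(Fintype.card α : 𝕜) + Fintype.card β - 2, (Fintype.card α : 𝕜) - 2,
        (Fintype.card β : 𝕜) - 2, -2} := by
  refine spectrum_adjMatrix_rookGraph_subset.antisymm ?_
  have hα := card_sub_one_mem_spectrum_adjMatrix_top (𝕜 := 𝕜) (V := α)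
  have hα' := neg_one_mem_spectrum_adjMatrix_top (𝕜 := 𝕜) (V := α)
  have hβ := card_sub_one_mem_spectrum_adjMatrix_top (𝕜 := 𝕜) (V := β)
  have hβ' := neg_one_mem_spectrum_adjMatrix_top (𝕜 := 𝕜) (V := β)
  rintro μ (rfl | rfl | rfl | rfl)
  · convert add_mem_spectrum_adjMatrix_boxProd hα hβ using 1; ring
  · convert add_mem_spectrum_adjMatrix_boxProd hα hβ' using 1; ring
  · convert add_mem_spectrum_adjMatrix_boxProd hα' hβ using 1; ring
  · convert add_mem_spectrum_adjMatrix_boxProd hα' hβ' using 1; norm_num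

end Spectrum

end SimpleGraph

theorem lineGraph_completeBipartite_n_two (n : ℕ) (hn : 3 ≤ n) :
    Fintype.card (completeBipartiteGraph (Fin n) (Fin 2)).edgeSet = 2 * n ∧
    ((completeBipartiteGraph (Fin n) (Fin 2)).lineGraph).IsRegularOfDegree n ∧
    ((completeBipartiteGraph (Fin n) (Fin 2)).lineGraph).IsBivariegated ∧
    spectrum ℝ (((completeBipartiteGraph (Fin n) (Fin 2)).lineGraph).adjMatrix ℝ)
      = {(n : ℝ), (n : ℝ) - 2, 0, -2} := by
  have : Nontrivial (Fin n) := Fin.nontrivial_iff_two_le.mpr (by omega)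
  let f := rookGraphIsoLineGraph (Fin n) (Fin 2)
  refine ⟨?_, ?_, f.isBivariegated (isBivariegated_boxProd_top_fin_two _), ?_⟩
  · simp [← Fintype.card_congr (completeBipartiteGraphEdgeEquiv (Fin n) (Fin 2)), mul_comm]
  · rw [f.isRegularOfDegree_iff]
    convert (IsRegularOfDegree.top (V := Fin n)).boxProd (IsRegularOfDegree.top (V := Fin 2))
      using 1
    simp only [Fintype.card_fin]
    omega
  · rw [f.spectrum_adjMatrix, spectrum_adjMatrix_rookGraph]
    norm_num
end
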